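/- arXiv:2504.20470 — 3 statements merged into one kernel-verified Lean document; each statement's English description precedes it below -/
import Mathlib

section
/- Identifiability of the treated-arm principal-stratum outcome distribution (Theorem 3(a)): Suppose two models (Ω, ℱ, μ, G, A, S⁰, S¹, Y⁰, Y¹) and (Ω', ℱ', μ', G', A', S'⁰, S'¹, Y'⁰, Y'¹) each satisfy Assumption 5, Assumption 7, Assumption 8, and Condition 4(i), and have the same observed data distribution, i.e. μ(G=g, A=a, S=s, Y=y) = μ'(G'=g, A'=a, S'=s, Y'=y) for all g ∈ Fin m and a, s, y ∈ {0,1}. Then for all (a,b) ∈ {(0,0),(0,1),(1,1)} and every g such that μ(S⁰=a, S¹=b, G=g) > 0 and μ'(S'⁰=a, S'¹=b, G'=g) > 0: P(Y¹=1 | S⁰=a, S¹=b, G=g) = P'(Y'¹=1 | S'⁰=a, S'¹=b, G'=g). -/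
/-!
Conditioning on a trial `g`, Assumption 5 makes the treatment independent of the potential
variables, so the treated (control) arm of the observed data reveals the law of `(S¹, Y¹)`
(of `(S⁰, Y⁰)`) given `G = g`. Under monotonicity the strata proportions are then identified:
`P(S⁰=1, S¹=1 | g) = P(S⁰=1 | g)` and `P(S⁰=0, S¹=1 | g) = P(S¹=1 | g) - P(S⁰=1 | g)`, and the
stratum `(0,0)` is the event `S¹ = 0` up to a null set. By Assumption 7,
`P(S¹=1, Y¹=1 | g)` is a combination of the two stratum outcome probabilities with the
identified weights of trial `g`; these equations over all trials form a linear system whose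
matrix has rank 2 by Condition 4(i), so the stratum outcome probabilities are identified.
-/

open MeasureTheory ProbabilityTheory

/-- Conditional probability `P(E | F) = μ(E ∩ F) / μ(F)` as a real number. -/
noncomputable def condP {Ω : Type*} [MeasurableSpace Ω] (μ : Measure Ω) (E F : Set Ω) : ℝ :=
  (μ (E ∩ F)).toReal / (μ F).toReal

open Set Matrix

lemma preimage_singleton_inter_preimage_eq {Ω α β : Type*} {A : Ω → α} {X O : Ω → β} {a : α}
    (hO : ∀ ω, A ω = a → O ω = X ω) (T : Set β) :
    A ⁻¹' {a} ∩ O ⁻¹' T = A ⁻¹' {a} ∩ X ⁻¹' T := by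
  ext ω
  exact and_congr_right fun h => by rw [mem_preimage, mem_preimage, hO ω h]

section General

variable {Ω Ω' α β γ : Type*} [MeasurableSpace Ω] [MeasurableSpace Ω']

lemma condP_eq_measureReal_cond {μ : Measure Ω} {F : Set Ω} (hF : MeasurableSet F) (E : Set Ω) :
    condP μ E F = μ[|F].real E := by
  rw [condP, measureReal_def, cond_apply hF, ENNReal.toReal_mul, ENNReal.toReal_inv, inter_comm,
    div_eq_inv_mul]

lemma measure_ne_zero_of_condP_pos {μ : Measure Ω} {E F : Set Ω} (h : 0 < condP μ E F) :
    μ F ≠ 0 := by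
  rintro hF
  simp [condP, hF] at h

lemma measureReal_inter_eq_mul_of_condP_eq {μ : Measure Ω} [IsFiniteMeasure μ] {E F : Set Ω}
    {θ : ℝ} (h : μ F ≠ 0 → condP μ E F = θ) : μ.real (E ∩ F) = μ.real F * θ := by
  by_cases hF : μ F = 0
  · simp [measureReal_def, hF, measure_mono_null inter_subset_right hF]
  · have hF' : μ.real F ≠ 0 := (ENNReal.toReal_pos hF (measure_ne_top μ F)).ne'
    rw [← h hF, condP, ← measureReal_def, ← measureReal_def, mul_div_cancel₀ _ hF']

lemma measure_preimage_eq_of_singleton [MeasurableSpace β] [Countable β]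
    [MeasurableSingletonClass β]
    {μ : Measure Ω} {μ' : Measure Ω'} {f : Ω → β} {f' : Ω' → β}
    (hf : Measurable f) (hf' : Measurable f') (h : ∀ b, μ (f ⁻¹' {b}) = μ' (f' ⁻¹' {b}))
    (T : Set β) : μ (f ⁻¹' T) = μ' (f' ⁻¹' T) := by
  have hmap : μ.map f = μ'.map f' := Measure.ext_of_singleton fun b => by
    rw [Measure.map_apply hf (measurableSet_singleton b),
      Measure.map_apply hf' (measurableSet_singleton b), h]
  rw [← Measure.map_apply hf .of_discrete, hmap, Measure.map_apply hf' .of_discrete]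

lemma cond_preimage_eq_of_measure_preimage_eq [MeasurableSpace γ] {μ : Measure Ω} {μ' : Measure Ω'}
    {G : Ω → γ} {O : Ω → β} {G' : Ω' → γ} {O' : Ω' → β}
    (hG : Measurable G) (hG' : Measurable G') [MeasurableSingletonClass γ]
    (h : ∀ T : Set (γ × β),
      μ ((fun ω => (G ω, O ω)) ⁻¹' T) = μ' ((fun ω => (G' ω, O' ω)) ⁻¹' T))
    (c : γ) (T : Set β) : μ[O ⁻¹' T | {ω | G ω = c}] = μ'[O' ⁻¹' T | {ω | G' ω = c}] := by
  have hprod (T : Set β) : μ ({ω | G ω = c} ∩ O ⁻¹' T) = μ' ({ω | G' ω = c} ∩ O' ⁻¹' T) :=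
    h (({c} : Set γ) ×ˢ T)
  have hC : MeasurableSet {ω | G ω = c} := hG (measurableSet_singleton c)
  have hC' : MeasurableSet {ω | G' ω = c} := hG' (measurableSet_singleton c)
  have huniv : μ {ω | G ω = c} = μ' {ω | G' ω = c} := by
    simpa only [preimage_univ, inter_univ] using hprod univ
  rw [cond_apply hC, cond_apply hC', hprod, huniv]

lemma indepFun_of_measureReal_inter_singleton [MeasurableSpace β] [MeasurableSpace γ]
    [Countable β] [Countable γ]
    [MeasurableSingletonClass β] [MeasurableSingletonClass γ] {ν : Measure Ω} [IsFiniteMeasure ν]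
    {f : Ω → β} {g : Ω → γ} (hf : Measurable f) (hg : Measurable g)
    (h : ∀ b c, ν.real (f ⁻¹' {b} ∩ g ⁻¹' {c}) = ν.real (f ⁻¹' {b}) * ν.real (g ⁻¹' {c})) :
    IndepFun f g ν := by
  rw [indepFun_iff_map_prod_eq_prod_map_map hf.aemeasurable hg.aemeasurable]
  refine Measure.ext_of_singleton fun ⟨b, c⟩ => ?_
  rw [Measure.map_apply (hf.prodMk hg) (measurableSet_singleton _), ← singleton_prod_singleton,
    Measure.prod_prod, Measure.map_apply hf (measurableSet_singleton _),
    Measure.map_apply hg (measurableSet_singleton _), mk_preimage_prod,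
    ← ENNReal.toReal_eq_toReal_iff' (measure_ne_top _ _)
      (ENNReal.mul_ne_top (measure_ne_top _ _) (measure_ne_top _ _)), ENNReal.toReal_mul]
  exact h b c

lemma measure_preimage_eq_div_of_indepFun [MeasurableSpace α] [MeasurableSpace β]
    [MeasurableSingletonClass α] {ν : Measure Ω} [IsFiniteMeasure ν]
    {A : Ω → α} {X O : Ω → β} {a : α} (hind : IndepFun A X ν) (hO : ∀ ω, A ω = a → O ω = X ω)
    (ha : ν (A ⁻¹' {a}) ≠ 0) {T : Set β} (hT : MeasurableSet T) :
    ν (X ⁻¹' T) = ν ((fun ω => (A ω, O ω)) ⁻¹' ({a} ×ˢ T))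
      / ν ((fun ω => (A ω, O ω)) ⁻¹' ({a} ×ˢ univ)) := by
  simp only [mk_preimage_prod, preimage_univ, inter_univ]
  rw [ENNReal.eq_div_iff ha (measure_ne_top ν _),
    ← hind.measure_inter_preimage_eq_mul _ _ (measurableSet_singleton a) hT,
    preimage_singleton_inter_preimage_eq hO]

lemma condP_cond {μ : Measure Ω} [IsFiniteMeasure μ] {C F : Set Ω} (hC : MeasurableSet C)
    (hF : MeasurableSet F) (E : Set Ω) : condP μ[|C] E F = condP μ E (C ∩ F) := by
  rw [condP_eq_measureReal_cond hF, condP_eq_measureReal_cond (hC.inter hF),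
    cond_cond_eq_cond_inter hC hF]

end General

section Strata

variable {Ω : Type*} [MeasurableSpace Ω] {ν : Measure Ω} {S0 S1 : Ω → Bool}

lemma measure_stratum_true_true (hmono : ∀ᵐ ω ∂ν, S0 ω ≤ S1 ω) :
    ν {ω | S0 ω = true ∧ S1 ω = true} = ν {ω | S0 ω = true} := by
  refine measure_congr (Filter.eventuallyEq_set.mpr ?_)
  filter_upwards [hmono] with ω hω
  revert hω
  cases S0 ω <;> cases S1 ω <;> simp

lemma measure_inter_stratum_false_false (hmono : ∀ᵐ ω ∂ν, S0 ω ≤ S1 ω) (E : Set Ω) :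
    ν (E ∩ {ω | S0 ω = false ∧ S1 ω = false}) = ν (E ∩ {ω | S1 ω = false}) := by
  refine measure_congr (Filter.EventuallyEq.rfl.inter (Filter.eventuallyEq_set.mpr ?_))
  filter_upwards [hmono] with ω hω
  revert hω
  cases S0 ω <;> cases S1 ω <;> simp

lemma measureReal_inter_eq_add_strata [IsFiniteMeasure ν] (hS0 : Measurable S0)
    (hS1 : Measurable S1) {E : Set Ω} (hE : MeasurableSet E) (b : Bool) :
    ν.real (E ∩ {ω | S1 ω = b}) = ν.real (E ∩ {ω | S0 ω = false ∧ S1 ω = b})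
      + ν.real (E ∩ {ω | S0 ω = true ∧ S1 ω = b}) := by
  rw [← measureReal_union]
  · congr 1
    ext ω
    cases h : S0 ω <;> simp [h]
  · refine disjoint_left.mpr ?_
    rintro ω ⟨-, h0, -⟩ ⟨-, h1, -⟩
    exact Bool.false_ne_true (h0.symm.trans h1)
  · exact hE.inter ((hS0 (measurableSet_singleton true)).inter (hS1 (measurableSet_singleton b)))

lemma measureReal_inter_eq_stratum_mul_add [IsFiniteMeasure ν] (hS0 : Measurable S0)
    (hS1 : Measurable S1) {E : Set Ω} (hE : MeasurableSet E) {θ : Bool → ℝ}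
    (hθ : ∀ c, ν {ω | S0 ω = c ∧ S1 ω = true} ≠ 0 →
      condP ν E {ω | S0 ω = c ∧ S1 ω = true} = θ c) :
    ν.real (E ∩ {ω | S1 ω = true}) = ν.real {ω | S0 ω = false ∧ S1 ω = true} * θ false
      + ν.real {ω | S0 ω = true ∧ S1 ω = true} * θ true := by
  rw [measureReal_inter_eq_add_strata hS0 hS1 hE, measureReal_inter_eq_mul_of_condP_eq (hθ false),
    measureReal_inter_eq_mul_of_condP_eq (hθ true)]

lemma measureReal_stratum_false_true [IsFiniteMeasure ν] (hS0 : Measurable S0)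
    (hS1 : Measurable S1) (hmono : ∀ᵐ ω ∂ν, S0 ω ≤ S1 ω) :
    ν.real {ω | S0 ω = false ∧ S1 ω = true}
      = ν.real {ω | S1 ω = true} - ν.real {ω | S0 ω = true} := by
  have h := measureReal_inter_eq_add_strata (ν := ν) hS0 hS1 MeasurableSet.univ true
  have h11 : ν.real {ω | S0 ω = true ∧ S1 ω = true} = ν.real {ω | S0 ω = true} := by
    simp only [measureReal_def, measure_stratum_true_true hmono]
  simp only [univ_inter] at h
  linarith

end Strata

section Model

variable {Ω : Type*} [MeasurableSpace Ω] {μ : Measure Ω}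
  {A S0 S1 Y0 Y1 S Y : Ω → Bool} {C : Set Ω}

lemma measurable_bif {X0 X1 : Ω → Bool} (hA : Measurable A) (hX0 : Measurable X0)
    (hX1 : Measurable X1) : Measurable fun ω => bif A ω then X1 ω else X0 ω :=
  (Measurable.of_discrete (f := fun p : Bool × Bool × Bool => bif p.1 then p.2.1 else p.2.2)).comp
    (hA.prodMk (hX1.prodMk hX0))

lemma indepFun_cond_of_condP (hC : MeasurableSet C) (hA : Measurable A) (hS0 : Measurable S0)
    (hS1 : Measurable S1) (hY0 : Measurable Y0) (hY1 : Measurable Y1)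
    (hind : ∀ a s0 s1 y0 y1 : Bool,
      condP μ {ω | A ω = a ∧ S0 ω = s0 ∧ S1 ω = s1 ∧ Y0 ω = y0 ∧ Y1 ω = y1} C =
        condP μ {ω | A ω = a} C * condP μ {ω | S0 ω = s0 ∧ S1 ω = s1 ∧ Y0 ω = y0 ∧ Y1 ω = y1} C) :
    IndepFun A (fun ω => (S0 ω, S1 ω, Y0 ω, Y1 ω)) μ[|C] := by
  refine indepFun_of_measureReal_inter_singleton hA
    (hS0.prodMk (hS1.prodMk (hY0.prodMk hY1))) fun a ⟨s0, s1, y0, y1⟩ => ?_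
  have h := hind a s0 s1 y0 y1
  simp only [condP_eq_measureReal_cond hC] at h
  convert h using 3 <;> ext ω <;> simp [Prod.ext_iff]

lemma cond_preimage_singleton_ne_zero [IsFiniteMeasure μ] (hA : Measurable A)
    (hov : 0 < condP μ {ω | A ω = true} C ∧ condP μ {ω | A ω = true} C < 1) (hC : MeasurableSet C)
    (a : Bool) : μ[A ⁻¹' {a} | C] ≠ 0 := by
  have := cond_isProbabilityMeasure (measure_ne_zero_of_condP_pos hov.1)
  have hpos : 0 < μ[|C].real (A ⁻¹' {a}) := by
    rw [condP_eq_measureReal_cond hC] at hov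
    cases a
    · have hcompl : A ⁻¹' {false} = (A ⁻¹' {true})ᶜ := by ext ω; simp
      rw [hcompl, probReal_compl_eq_one_sub (hA (measurableSet_singleton true))]
      exact sub_pos.mpr hov.2
    · exact hov.1
  exact fun h => by simp [measureReal_def, h] at hpos

lemma ae_cond_le_of_measure_eq_one [IsProbabilityMeasure μ] (hS0 : Measurable S0)
    (hS1 : Measurable S1) (hmono : μ {ω | S0 ω ≤ S1 ω} = 1) : ∀ᵐ ω ∂μ[|C], S0 ω ≤ S1 ω := by
  have hmeas : MeasurableSet {ω | S0 ω ≤ S1 ω} :=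
    (hS0.prodMk hS1) (MeasurableSet.of_discrete (s := {p : Bool × Bool | p.1 ≤ p.2}))
  exact cond_absolutelyContinuous.ae_le
    ((ae_iff_measure_eq hmeas.nullMeasurableSet).mpr (by rw [hmono, measure_univ]))

lemma cond_potential_eq_div [IsFiniteMeasure μ] (hC : MeasurableSet C) (hA : Measurable A)
    (hS0 : Measurable S0) (hS1 : Measurable S1) (hY0 : Measurable Y0) (hY1 : Measurable Y1)
    (hSdef : ∀ ω, S ω = bif A ω then S1 ω else S0 ω)
    (hYdef : ∀ ω, Y ω = bif A ω then Y1 ω else Y0 ω)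
    (hov : 0 < condP μ {ω | A ω = true} C ∧ condP μ {ω | A ω = true} C < 1)
    (hind : ∀ a s0 s1 y0 y1 : Bool,
      condP μ {ω | A ω = a ∧ S0 ω = s0 ∧ S1 ω = s1 ∧ Y0 ω = y0 ∧ Y1 ω = y1} C =
        condP μ {ω | A ω = a} C * condP μ {ω | S0 ω = s0 ∧ S1 ω = s1 ∧ Y0 ω = y0 ∧ Y1 ω = y1} C)
    (a : Bool) (T : Set (Bool × Bool)) :
    μ[(fun ω => (bif a then S1 ω else S0 ω, bif a then Y1 ω else Y0 ω)) ⁻¹' T | C]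
      = μ[(fun ω => (A ω, S ω, Y ω)) ⁻¹' ({a} ×ˢ T) | C]
        / μ[(fun ω => (A ω, S ω, Y ω)) ⁻¹' ({a} ×ˢ univ) | C] := by
  have := cond_isProbabilityMeasure (measure_ne_zero_of_condP_pos hov.1)
  have hind : IndepFun A (fun ω => (bif a then S1 ω else S0 ω, bif a then Y1 ω else Y0 ω)) μ[|C] :=
    (indepFun_cond_of_condP hC hA hS0 hS1 hY0 hY1 hind).comp measurable_id
      (Measurable.of_discrete (f := fun w : Bool × Bool × Bool × Bool =>
        (bif a then w.2.1 else w.1, bif a then w.2.2.2 else w.2.2.1)))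
  exact measure_preimage_eq_div_of_indepFun hind (fun ω h => by rw [hSdef, hYdef, h])
    (cond_preimage_singleton_ne_zero hA hov hC a) .of_discrete

end Model

section Trials

variable {Ω ι : Type*} [MeasurableSpace Ω] [MeasurableSpace ι] [MeasurableSingletonClass ι]
  {μ : Measure Ω} {G : Ω → ι} {S0 S1 Y1 : Ω → Bool}

noncomputable def stratumMatrix (μ : Measure Ω) (G : Ω → ι) (S0 S1 : Ω → Bool) :
    Matrix ι (Fin 2) ℝ :=
  Matrix.of fun g j => condP μ {ω | S0 ω = (j = 1 : Bool) ∧ S1 ω = true} {ω | G ω = g}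

noncomputable def stratumOutcome (μ : Measure Ω) (S0 S1 Y1 : Ω → Bool) : Fin 2 → ℝ :=
  fun j => condP μ {ω | Y1 ω = true} {ω | S0 ω = (j = 1 : Bool) ∧ S1 ω = true}

omit [MeasurableSpace Ω] [MeasurableSpace ι] [MeasurableSingletonClass ι] in
lemma setOf_inter_stratum (G : Ω → ι) (S0 S1 : Ω → Bool) (g : ι) (c b : Bool) :
    {ω | G ω = g} ∩ {ω | S0 ω = c ∧ S1 ω = b} = {ω | S0 ω = c ∧ S1 ω = b ∧ G ω = g} := by
  ext ω
  exact and_comm.trans and_assoc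

lemma condP_stratum_eq_condP_cond [IsFiniteMeasure μ] (hG : Measurable G) (hS0 : Measurable S0)
    (hS1 : Measurable S1) (E : Set Ω) (c b : Bool) (g : ι) :
    condP μ E {ω | S0 ω = c ∧ S1 ω = b ∧ G ω = g}
      = condP μ[|{ω | G ω = g}] E {ω | S0 ω = c ∧ S1 ω = b} := by
  have hstratum : MeasurableSet {ω | S0 ω = c ∧ S1 ω = b} :=
    (hS0 (measurableSet_singleton c)).inter (hS1 (measurableSet_singleton b))
  have hC : MeasurableSet {ω | G ω = g} := hG (measurableSet_singleton g)
  rw [condP_cond hC hstratum, setOf_inter_stratum]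

lemma stratumMatrix_mulVec_stratumOutcome [IsFiniteMeasure μ] (hG : Measurable G)
    (hS0 : Measurable S0) (hS1 : Measurable S1) (hY1 : Measurable Y1)
    (hA7 : ∀ c g, 0 < μ {ω | S0 ω = c ∧ S1 ω = true ∧ G ω = g} →
      condP μ {ω | Y1 ω = true} {ω | S0 ω = c ∧ S1 ω = true ∧ G ω = g} =
        condP μ {ω | Y1 ω = true} {ω | S0 ω = c ∧ S1 ω = true}) (g : ι) :
    (stratumMatrix μ G S0 S1 *ᵥ stratumOutcome μ S0 S1 Y1) g
      = μ[|{ω | G ω = g}].real ({ω | Y1 ω = true} ∩ {ω | S1 ω = true}) := by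
  have hC : MeasurableSet {ω | G ω = g} := hG (measurableSet_singleton g)
  have hE : MeasurableSet {ω | Y1 ω = true} := hY1 (measurableSet_singleton true)
  rw [measureReal_inter_eq_stratum_mul_add hS0 hS1 hE
    (θ := fun c => condP μ {ω | Y1 ω = true} {ω | S0 ω = c ∧ S1 ω = true})]
  · simp [mulVec, dotProduct, Fin.sum_univ_two, stratumMatrix, stratumOutcome,
      condP_eq_measureReal_cond hC]
  · intro c hc
    rw [← condP_stratum_eq_condP_cond hG hS0 hS1]
    refine hA7 c g ?_
    rw [← setOf_inter_stratum]
    exact inter_pos_of_cond_ne_zero hC hc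

lemma stratumMatrix_apply_zero (hG : Measurable G) (hS0 : Measurable S0) (hS1 : Measurable S1)
    {g : ι} (hmono : ∀ᵐ ω ∂μ[|{ω | G ω = g}], S0 ω ≤ S1 ω) :
    stratumMatrix μ G S0 S1 g 0
      = μ[|{ω | G ω = g}].real {ω | S1 ω = true} - μ[|{ω | G ω = g}].real {ω | S0 ω = true} := by
  rw [← measureReal_stratum_false_true hS0 hS1 hmono]
  exact condP_eq_measureReal_cond (hG (measurableSet_singleton g)) _

lemma stratumMatrix_apply_one (hG : Measurable G) {g : ι}
    (hmono : ∀ᵐ ω ∂μ[|{ω | G ω = g}], S0 ω ≤ S1 ω) :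
    stratumMatrix μ G S0 S1 g 1 = μ[|{ω | G ω = g}].real {ω | S0 ω = true} := by
  rw [measureReal_def, ← measure_stratum_true_true hmono]
  exact condP_eq_measureReal_cond (hG (measurableSet_singleton g)) _

lemma condP_stratum_false_false [IsFiniteMeasure μ] (hG : Measurable G) (hS0 : Measurable S0)
    (hS1 : Measurable S1) {g : ι} (hmono : ∀ᵐ ω ∂μ[|{ω | G ω = g}], S0 ω ≤ S1 ω) (E : Set Ω) :
    condP μ E {ω | S0 ω = false ∧ S1 ω = false ∧ G ω = g}
      = μ[|{ω | G ω = g}].real (E ∩ {ω | S1 ω = false})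
        / μ[|{ω | G ω = g}].real {ω | S1 ω = false} := by
  rw [condP_stratum_eq_condP_cond hG hS0 hS1, condP, measure_inter_stratum_false_false hmono,
    ← univ_inter {ω | S0 ω = false ∧ S1 ω = false}, measure_inter_stratum_false_false hmono,
    univ_inter]
  rfl

end Trials

theorem Matrix.mulVec_injective_of_rank_eq_card {m n K : Type*} [Fintype m] [Fintype n]
    [Field K] (M : Matrix m n K) (h : M.rank = Fintype.card n) : Function.Injective M.mulVec := by
  have hrn := M.mulVecLin.finrank_range_add_finrank_ker
  rw [← Matrix.rank, h, Module.finrank_fintype_fun_eq_card] at hrn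
  have hker : LinearMap.ker M.mulVecLin = ⊥ := Submodule.finrank_eq_zero.mp (by omega)
  exact LinearMap.ker_eq_bot.mp hker

section Identification

variable {Ω Ω' ι : Type*} [MeasurableSpace Ω] [MeasurableSpace Ω'] [MeasurableSpace ι]
  [MeasurableSingletonClass ι] {μ : Measure Ω} {μ' : Measure Ω'} {G : Ω → ι} {G' : Ω' → ι}
  {A S0 S1 Y0 Y1 S Y : Ω → Bool} {A' S0' S1' Y0' Y1' S' Y' : Ω' → Bool}

lemma cond_potential_eq [Countable ι] [IsFiniteMeasure μ] [IsFiniteMeasure μ']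
    (hG : Measurable G) (hA : Measurable A) (hS0 : Measurable S0) (hS1 : Measurable S1)
    (hY0 : Measurable Y0) (hY1 : Measurable Y1)
    (hG' : Measurable G') (hA' : Measurable A') (hS0' : Measurable S0') (hS1' : Measurable S1')
    (hY0' : Measurable Y0') (hY1' : Measurable Y1')
    (hSdef : ∀ ω, S ω = bif A ω then S1 ω else S0 ω)
    (hYdef : ∀ ω, Y ω = bif A ω then Y1 ω else Y0 ω)
    (hS'def : ∀ ω, S' ω = bif A' ω then S1' ω else S0' ω)
    (hY'def : ∀ ω, Y' ω = bif A' ω then Y1' ω else Y0' ω)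
    (hov : ∀ g, 0 < condP μ {ω | A ω = true} {ω | G ω = g} ∧
      condP μ {ω | A ω = true} {ω | G ω = g} < 1)
    (hind : ∀ g (a s0 s1 y0 y1 : Bool),
      condP μ {ω | A ω = a ∧ S0 ω = s0 ∧ S1 ω = s1 ∧ Y0 ω = y0 ∧ Y1 ω = y1} {ω | G ω = g} =
        condP μ {ω | A ω = a} {ω | G ω = g} *
          condP μ {ω | S0 ω = s0 ∧ S1 ω = s1 ∧ Y0 ω = y0 ∧ Y1 ω = y1} {ω | G ω = g})
    (hov' : ∀ g, 0 < condP μ' {ω | A' ω = true} {ω | G' ω = g} ∧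
      condP μ' {ω | A' ω = true} {ω | G' ω = g} < 1)
    (hind' : ∀ g (a s0 s1 y0 y1 : Bool),
      condP μ' {ω | A' ω = a ∧ S0' ω = s0 ∧ S1' ω = s1 ∧ Y0' ω = y0 ∧ Y1' ω = y1}
          {ω | G' ω = g} =
        condP μ' {ω | A' ω = a} {ω | G' ω = g} *
          condP μ' {ω | S0' ω = s0 ∧ S1' ω = s1 ∧ Y0' ω = y0 ∧ Y1' ω = y1} {ω | G' ω = g})
    (hobs : ∀ g (a s y : Bool),
      μ {ω | G ω = g ∧ A ω = a ∧ S ω = s ∧ Y ω = y} =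
        μ' {ω | G' ω = g ∧ A' ω = a ∧ S' ω = s ∧ Y' ω = y})
    (g : ι) (a : Bool) (p : Bool × Bool → Prop) :
    μ[|{ω | G ω = g}].real {ω | p (bif a then S1 ω else S0 ω, bif a then Y1 ω else Y0 ω)} =
      μ'[|{ω | G' ω = g}].real
        {ω | p (bif a then S1' ω else S0' ω, bif a then Y1' ω else Y0' ω)} := by
  have hS : Measurable S := funext hSdef ▸ measurable_bif hA hS0 hS1
  have hY : Measurable Y := funext hYdef ▸ measurable_bif hA hY0 hY1
  have hS' : Measurable S' := funext hS'def ▸ measurable_bif hA' hS0' hS1'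
  have hY' : Measurable Y' := funext hY'def ▸ measurable_bif hA' hY0' hY1'
  have hobsLaw := cond_preimage_eq_of_measure_preimage_eq hG hG'
    (measure_preimage_eq_of_singleton (hG.prodMk (hA.prodMk (hS.prodMk hY)))
      (hG'.prodMk (hA'.prodMk (hS'.prodMk hY')))
      fun ⟨g, a, s, y⟩ => by
        simpa only [preimage, mem_singleton_iff, Prod.mk.injEq] using hobs g a s y)
  have hC : MeasurableSet {ω | G ω = g} := hG (measurableSet_singleton g)
  have hC' : MeasurableSet {ω | G' ω = g} := hG' (measurableSet_singleton g)
  refine congrArg ENNReal.toReal ((cond_potential_eq_div hC hA hS0 hS1 hY0 hY1 hSdef hYdef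
    (hov g) (hind g) a {x | p x}).trans ?_)
  rw [hobsLaw, hobsLaw]
  exact (cond_potential_eq_div hC' hA' hS0' hS1' hY0' hY1' hS'def hY'def (hov' g) (hind' g) a
    {x | p x}).symm

lemma stratumOutcome_eq [Fintype ι] [IsFiniteMeasure μ] [IsFiniteMeasure μ']
    (hG : Measurable G) (hS0 : Measurable S0) (hS1 : Measurable S1) (hY1 : Measurable Y1)
    (hG' : Measurable G') (hS0' : Measurable S0') (hS1' : Measurable S1')
    (hY1' : Measurable Y1')
    (hA7 : ∀ c g, 0 < μ {ω | S0 ω = c ∧ S1 ω = true ∧ G ω = g} →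
      condP μ {ω | Y1 ω = true} {ω | S0 ω = c ∧ S1 ω = true ∧ G ω = g} =
        condP μ {ω | Y1 ω = true} {ω | S0 ω = c ∧ S1 ω = true})
    (hA7' : ∀ c g, 0 < μ' {ω | S0' ω = c ∧ S1' ω = true ∧ G' ω = g} →
      condP μ' {ω | Y1' ω = true} {ω | S0' ω = c ∧ S1' ω = true ∧ G' ω = g} =
        condP μ' {ω | Y1' ω = true} {ω | S0' ω = c ∧ S1' ω = true})
    (hmono : ∀ g, ∀ᵐ ω ∂μ[|{ω | G ω = g}], S0 ω ≤ S1 ω)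
    (hmono' : ∀ g, ∀ᵐ ω ∂μ'[|{ω | G' ω = g}], S0' ω ≤ S1' ω)
    (hrank : (stratumMatrix μ G S0 S1).rank = 2)
    (hS0law : ∀ g, μ[|{ω | G ω = g}].real {ω | S0 ω = true}
      = μ'[|{ω | G' ω = g}].real {ω | S0' ω = true})
    (hS1law : ∀ g, μ[|{ω | G ω = g}].real {ω | S1 ω = true}
      = μ'[|{ω | G' ω = g}].real {ω | S1' ω = true})
    (hY1law : ∀ g, μ[|{ω | G ω = g}].real ({ω | Y1 ω = true} ∩ {ω | S1 ω = true})
      = μ'[|{ω | G' ω = g}].real ({ω | Y1' ω = true} ∩ {ω | S1' ω = true})) :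
    stratumOutcome μ S0 S1 Y1 = stratumOutcome μ' S0' S1' Y1' := by
  have hM : stratumMatrix μ G S0 S1 = stratumMatrix μ' G' S0' S1' := by
    ext g j
    fin_cases j
    · exact (stratumMatrix_apply_zero hG hS0 hS1 (hmono g)).trans
        ((congrArg₂ (· - ·) (hS1law g) (hS0law g)).trans
          (stratumMatrix_apply_zero hG' hS0' hS1' (hmono' g)).symm)
    · exact (stratumMatrix_apply_one hG (hmono g)).trans
        ((hS0law g).trans (stratumMatrix_apply_one hG' (hmono' g)).symm)
  refine (stratumMatrix μ G S0 S1).mulVec_injective_of_rank_eq_card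
    (hrank.trans (Fintype.card_fin 2).symm) (funext fun g => ?_)
  rw [stratumMatrix_mulVec_stratumOutcome hG hS0 hS1 hY1 hA7, hM,
    stratumMatrix_mulVec_stratumOutcome hG' hS0' hS1' hY1' hA7', hY1law]

end Identification

theorem stmt7_general
    {Ω Ω' : Type*} [MeasurableSpace Ω] [MeasurableSpace Ω']
    (μ : Measure Ω) (μ' : Measure Ω')
    [IsProbabilityMeasure μ] [IsProbabilityMeasure μ']
    {m : ℕ}
    (G : Ω → Fin m) (A S0 S1 Y0 Y1 S Y : Ω → Bool)
    (G' : Ω' → Fin m) (A' S0' S1' Y0' Y1' S' Y' : Ω' → Bool)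
    (hGmeas : Measurable G) (hAmeas : Measurable A)
    (hS0meas : Measurable S0) (hS1meas : Measurable S1)
    (hY0meas : Measurable Y0) (hY1meas : Measurable Y1)
    (hG'meas : Measurable G') (hA'meas : Measurable A')
    (hS0'meas : Measurable S0') (hS1'meas : Measurable S1')
    (hY0'meas : Measurable Y0') (hY1'meas : Measurable Y1')
    (hSdef : ∀ ω, S ω = bif A ω then S1 ω else S0 ω)
    (hYdef : ∀ ω, Y ω = bif A ω then Y1 ω else Y0 ω)
    (hS'def : ∀ ω, S' ω = bif A' ω then S1' ω else S0' ω)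
    (hY'def : ∀ ω, Y' ω = bif A' ω then Y1' ω else Y0' ω)
    -- Assumption 5 for μ
    (hA5ov : ∀ g : Fin m, 0 < condP μ {ω | A ω = true} {ω | G ω = g} ∧
        condP μ {ω | A ω = true} {ω | G ω = g} < 1)
    (hA5ind : ∀ (g : Fin m) (a s0 s1 y0 y1 : Bool),
      condP μ {ω | A ω = a ∧ S0 ω = s0 ∧ S1 ω = s1 ∧ Y0 ω = y0 ∧ Y1 ω = y1} {ω | G ω = g} =
        condP μ {ω | A ω = a} {ω | G ω = g} *
          condP μ {ω | S0 ω = s0 ∧ S1 ω = s1 ∧ Y0 ω = y0 ∧ Y1 ω = y1} {ω | G ω = g})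
    -- Assumption 5 for μ'
    (hA5ov' : ∀ g : Fin m, 0 < condP μ' {ω | A' ω = true} {ω | G' ω = g} ∧
        condP μ' {ω | A' ω = true} {ω | G' ω = g} < 1)
    (hA5ind' : ∀ (g : Fin m) (a s0 s1 y0 y1 : Bool),
      condP μ' {ω | A' ω = a ∧ S0' ω = s0 ∧ S1' ω = s1 ∧ Y0' ω = y0 ∧ Y1' ω = y1}
          {ω | G' ω = g} =
        condP μ' {ω | A' ω = a} {ω | G' ω = g} *
          condP μ' {ω | S0' ω = s0 ∧ S1' ω = s1 ∧ Y0' ω = y0 ∧ Y1' ω = y1} {ω | G' ω = g})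
    -- Assumption 7 for μ
    (hA7 : ∀ (s0 s1 : Bool) (g : Fin m), 0 < μ {ω | S0 ω = s0 ∧ S1 ω = s1 ∧ G ω = g} →
      condP μ {ω | Y1 ω = true} {ω | S0 ω = s0 ∧ S1 ω = s1 ∧ G ω = g} =
        condP μ {ω | Y1 ω = true} {ω | S0 ω = s0 ∧ S1 ω = s1} ∧
      condP μ {ω | Y0 ω = true} {ω | S0 ω = s0 ∧ S1 ω = s1 ∧ G ω = g} =
        condP μ {ω | Y0 ω = true} {ω | S0 ω = s0 ∧ S1 ω = s1})
    -- Assumption 7 for μ'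
    (hA7' : ∀ (s0 s1 : Bool) (g : Fin m), 0 < μ' {ω | S0' ω = s0 ∧ S1' ω = s1 ∧ G' ω = g} →
      condP μ' {ω | Y1' ω = true} {ω | S0' ω = s0 ∧ S1' ω = s1 ∧ G' ω = g} =
        condP μ' {ω | Y1' ω = true} {ω | S0' ω = s0 ∧ S1' ω = s1} ∧
      condP μ' {ω | Y0' ω = true} {ω | S0' ω = s0 ∧ S1' ω = s1 ∧ G' ω = g} =
        condP μ' {ω | Y0' ω = true} {ω | S0' ω = s0 ∧ S1' ω = s1})
    -- Assumption 8 (monotonicity) for μ and μ'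
    (hA8 : μ {ω | S0 ω ≤ S1 ω} = 1)
    (hA8' : μ' {ω | S0' ω ≤ S1' ω} = 1)
    -- Condition 4(i): columns P(S⁰=0, S¹=1 | G=g) and P(S⁰=1, S¹=1 | G=g)
    (hC4i : (Matrix.of fun (g : Fin m) (j : Fin 2) =>
      condP μ {ω | S0 ω = (j = 1 : Bool) ∧ S1 ω = true} {ω | G ω = g}).rank = 2)
    -- equal observed data distributions
    (hobs : ∀ (g : Fin m) (a s y : Bool),
      μ {ω | G ω = g ∧ A ω = a ∧ S ω = s ∧ Y ω = y} =
        μ' {ω | G' ω = g ∧ A' ω = a ∧ S' ω = s ∧ Y' ω = y}) :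
    ∀ a b : Bool, (a, b) ≠ (true, false) → ∀ g : Fin m,
      0 < μ {ω | S0 ω = a ∧ S1 ω = b ∧ G ω = g} →
      0 < μ' {ω | S0' ω = a ∧ S1' ω = b ∧ G' ω = g} →
      condP μ {ω | Y1 ω = true} {ω | S0 ω = a ∧ S1 ω = b ∧ G ω = g} =
        condP μ' {ω | Y1' ω = true} {ω | S0' ω = a ∧ S1' ω = b ∧ G' ω = g} := by
  intro a b hab g hpos hpos'
  have hpot := cond_potential_eq hGmeas hAmeas hS0meas hS1meas hY0meas hY1meas hG'meas hA'meas
    hS0'meas hS1'meas hY0'meas hY1'meas hSdef hYdef hS'def hY'def hA5ov hA5ind hA5ov' hA5ind' hobs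
  have hmono (g : Fin m) := ae_cond_le_of_measure_eq_one (C := {ω | G ω = g}) hS0meas hS1meas hA8
  have hmono' (g : Fin m) :=
    ae_cond_le_of_measure_eq_one (C := {ω | G' ω = g}) hS0'meas hS1'meas hA8'
  have hθ := stratumOutcome_eq hGmeas hS0meas hS1meas hY1meas hG'meas hS0'meas hS1'meas hY1'meas
    (fun c g h => (hA7 c true g h).1) (fun c g h => (hA7' c true g h).1) hmono hmono' hC4i
    (fun g => hpot g false (·.1 = true)) (fun g => hpot g true (·.1 = true))
    (fun g => hpot g true fun x => x.2 = true ∧ x.1 = true)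
  cases a <;> cases b
  · rw [condP_stratum_false_false hGmeas hS0meas hS1meas (hmono g),
      condP_stratum_false_false hG'meas hS0'meas hS1'meas (hmono' g)]
    exact congrArg₂ (· / ·) (hpot g true fun x => x.2 = true ∧ x.1 = false)
      (hpot g true fun x => x.1 = false)
  · rw [(hA7 false true g hpos).1, (hA7' false true g hpos').1]
    exact congrFun hθ 0
  · exact absurd rfl hab
  · rw [(hA7 true true g hpos).1, (hA7' true true g hpos').1]
    exact congrFun hθ 1

/-- **Theorem 3(a).** Under Assumptions 5, 7, 8 and Condition 4(i), the treated-arm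
principal-stratum outcome distribution `P(Y¹=1 | S⁰=a, S¹=b, G=g)` is identified from the
observed data distribution for all principal strata `(a,b) ∈ {(0,0),(0,1),(1,1)}`. -/
theorem stmt7
    {Ω Ω' : Type*} [MeasurableSpace Ω] [MeasurableSpace Ω']
    (μ : Measure Ω) (μ' : Measure Ω')
    [IsProbabilityMeasure μ] [IsProbabilityMeasure μ']
    {m : ℕ} (hm : 1 ≤ m)
    (G : Ω → Fin m) (A S0 S1 Y0 Y1 S Y : Ω → Bool)
    (G' : Ω' → Fin m) (A' S0' S1' Y0' Y1' S' Y' : Ω' → Bool)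
    (hGmeas : Measurable G) (hAmeas : Measurable A)
    (hS0meas : Measurable S0) (hS1meas : Measurable S1)
    (hY0meas : Measurable Y0) (hY1meas : Measurable Y1)
    (hG'meas : Measurable G') (hA'meas : Measurable A')
    (hS0'meas : Measurable S0') (hS1'meas : Measurable S1')
    (hY0'meas : Measurable Y0') (hY1'meas : Measurable Y1')
    (hSdef : ∀ ω, S ω = bif A ω then S1 ω else S0 ω)
    (hYdef : ∀ ω, Y ω = bif A ω then Y1 ω else Y0 ω)
    (hS'def : ∀ ω, S' ω = bif A' ω then S1' ω else S0' ω)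
    (hY'def : ∀ ω, Y' ω = bif A' ω then Y1' ω else Y0' ω)
    -- Assumption 5 for μ
    (hA5pos : ∀ g : Fin m, 0 < μ {ω | G ω = g})
    (hA5ov : ∀ g : Fin m, 0 < condP μ {ω | A ω = true} {ω | G ω = g} ∧
        condP μ {ω | A ω = true} {ω | G ω = g} < 1)
    (hA5ind : ∀ (g : Fin m) (a s0 s1 y0 y1 : Bool),
      condP μ {ω | A ω = a ∧ S0 ω = s0 ∧ S1 ω = s1 ∧ Y0 ω = y0 ∧ Y1 ω = y1} {ω | G ω = g} =
        condP μ {ω | A ω = a} {ω | G ω = g} *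
          condP μ {ω | S0 ω = s0 ∧ S1 ω = s1 ∧ Y0 ω = y0 ∧ Y1 ω = y1} {ω | G ω = g})
    -- Assumption 5 for μ'
    (hA5pos' : ∀ g : Fin m, 0 < μ' {ω | G' ω = g})
    (hA5ov' : ∀ g : Fin m, 0 < condP μ' {ω | A' ω = true} {ω | G' ω = g} ∧
        condP μ' {ω | A' ω = true} {ω | G' ω = g} < 1)
    (hA5ind' : ∀ (g : Fin m) (a s0 s1 y0 y1 : Bool),
      condP μ' {ω | A' ω = a ∧ S0' ω = s0 ∧ S1' ω = s1 ∧ Y0' ω = y0 ∧ Y1' ω = y1}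
          {ω | G' ω = g} =
        condP μ' {ω | A' ω = a} {ω | G' ω = g} *
          condP μ' {ω | S0' ω = s0 ∧ S1' ω = s1 ∧ Y0' ω = y0 ∧ Y1' ω = y1} {ω | G' ω = g})
    -- Assumption 7 for μ
    (hA7 : ∀ (s0 s1 : Bool) (g : Fin m), 0 < μ {ω | S0 ω = s0 ∧ S1 ω = s1 ∧ G ω = g} →
      condP μ {ω | Y1 ω = true} {ω | S0 ω = s0 ∧ S1 ω = s1 ∧ G ω = g} =
        condP μ {ω | Y1 ω = true} {ω | S0 ω = s0 ∧ S1 ω = s1} ∧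
      condP μ {ω | Y0 ω = true} {ω | S0 ω = s0 ∧ S1 ω = s1 ∧ G ω = g} =
        condP μ {ω | Y0 ω = true} {ω | S0 ω = s0 ∧ S1 ω = s1})
    -- Assumption 7 for μ'
    (hA7' : ∀ (s0 s1 : Bool) (g : Fin m), 0 < μ' {ω | S0' ω = s0 ∧ S1' ω = s1 ∧ G' ω = g} →
      condP μ' {ω | Y1' ω = true} {ω | S0' ω = s0 ∧ S1' ω = s1 ∧ G' ω = g} =
        condP μ' {ω | Y1' ω = true} {ω | S0' ω = s0 ∧ S1' ω = s1} ∧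
      condP μ' {ω | Y0' ω = true} {ω | S0' ω = s0 ∧ S1' ω = s1 ∧ G' ω = g} =
        condP μ' {ω | Y0' ω = true} {ω | S0' ω = s0 ∧ S1' ω = s1})
    -- Assumption 8 (monotonicity) for μ and μ'
    (hA8 : μ {ω | S0 ω ≤ S1 ω} = 1)
    (hA8' : μ' {ω | S0' ω ≤ S1' ω} = 1)
    -- Condition 4(i): columns P(S⁰=0, S¹=1 | G=g) and P(S⁰=1, S¹=1 | G=g)
    (hC4i : (Matrix.of fun (g : Fin m) (j : Fin 2) =>
      condP μ {ω | S0 ω = (j = 1 : Bool) ∧ S1 ω = true} {ω | G ω = g}).rank = 2)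
    (hC4i' : (Matrix.of fun (g : Fin m) (j : Fin 2) =>
      condP μ' {ω | S0' ω = (j = 1 : Bool) ∧ S1' ω = true} {ω | G' ω = g}).rank = 2)
    -- equal observed data distributions
    (hobs : ∀ (g : Fin m) (a s y : Bool),
      μ {ω | G ω = g ∧ A ω = a ∧ S ω = s ∧ Y ω = y} =
        μ' {ω | G' ω = g ∧ A' ω = a ∧ S' ω = s ∧ Y' ω = y}) :
    ∀ a b : Bool, (a, b) ≠ (true, false) → ∀ g : Fin m,
      0 < μ {ω | S0 ω = a ∧ S1 ω = b ∧ G ω = g} →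
      0 < μ' {ω | S0' ω = a ∧ S1' ω = b ∧ G' ω = g} →
      condP μ {ω | Y1 ω = true} {ω | S0 ω = a ∧ S1 ω = b ∧ G ω = g} =
        condP μ' {ω | Y1' ω = true} {ω | S0' ω = a ∧ S1' ω = b ∧ G' ω = g} :=
  stmt7_general μ μ' G A S0 S1 Y0 Y1 S Y G' A' S0' S1' Y0' Y1' S' Y' hGmeas hAmeas hS0meas hS1meas
    hY0meas hY1meas hG'meas hA'meas hS0'meas hS1'meas hY0'meas hY1'meas hSdef hYdef hS'def hY'def
    hA5ov hA5ind hA5ov' hA5ind' hA7 hA7' hA8 hA8' hC4i hobs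
end

section
/- Observed-data linear system (Equation (2)): Under Assumptions 1 and 2, for every g ∈ Fin m, P(Y=1 | G=g, A=1) = π₁₍₀₎·P(Y=0 | G=g, A=0) + π₁₍₁₎·P(Y=1 | G=g, A=0), where π₁₍ₐ₎ := P(Y¹=1 | Y⁰=a) and all displayed conditional probabilities are well-defined by Assumption 1. -/
/-!
Fix a trial `g` and condition on `G = g`. Trial unconfoundedness makes `A` independent of
`(Y⁰, Y¹)`, so `P(Y=1 | g, A=1) = P(Y¹=1 | g)` and `P(Y=a | g, A=0) = P(Y⁰=a | g)`.
Splitting `P(Y¹=1 | g)` over the value of `Y⁰` with the chain rule and replacing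
`P(Y¹=1 | Y⁰=a, g)` by `π₁₍ₐ₎` (transportability) gives `∑ₐ π₁₍ₐ₎ P(Y⁰=a | g)`.
-/

open MeasureTheory ProbabilityTheory

section CondP

variable {Ω : Type*} [MeasurableSpace Ω] {μ : Measure Ω} {E B F : Set Ω}

lemma condP_eq_measureReal (μ : Measure Ω) (E F : Set Ω) :
    condP μ E F = μ.real (E ∩ F) / μ.real F := rfl

lemma condP_congr {E' : Set Ω} (h : E ∩ F = E' ∩ F) : condP μ E F = condP μ E' F := by
  rw [condP_eq_measureReal, condP_eq_measureReal, h]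

lemma measureReal_ne_zero_of_condP_ne_zero (h : condP μ E F ≠ 0) : μ.real F ≠ 0 := by
  rintro hF
  simp [condP_eq_measureReal, hF] at h

lemma condP_univ (hF : μ.real F ≠ 0) : condP μ Set.univ F = 1 := by
  rw [condP_eq_measureReal, Set.univ_inter, div_self hF]

lemma condP_inter_true_add_condP_inter_false [IsFiniteMeasure μ] {f : Ω → Bool}
    (hf : Measurable f) (E F : Set Ω) :
    condP μ (E ∩ {ω | f ω = true}) F + condP μ (E ∩ {ω | f ω = false}) F = condP μ E F := by
  have hS : MeasurableSet {ω | f ω = true} := hf (measurableSet_singleton true)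
  have hfalse : E ∩ {ω | f ω = false} ∩ F = E ∩ F ∩ {ω | f ω = true}ᶜ := by
    ext ω; simp only [Set.mem_inter_iff, Set.mem_compl_iff, Set.mem_ofPred_eq, Bool.not_eq_true]
    tauto
  rw [condP_eq_measureReal, condP_eq_measureReal, condP_eq_measureReal, ← add_div, hfalse,
    ← Set.sdiff_eq, Set.inter_right_comm, measureReal_inter_add_sdiff hS]

lemma condP_false_eq_one_sub_condP_true [IsFiniteMeasure μ] {f : Ω → Bool} (hf : Measurable f)
    (hF : μ.real F ≠ 0) :
    condP μ {ω | f ω = false} F = 1 - condP μ {ω | f ω = true} F := by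
  rw [← condP_univ hF, ← condP_inter_true_add_condP_inter_false hf Set.univ F, Set.univ_inter,
    Set.univ_inter, add_sub_cancel_left]

lemma condP_of_eq_bif_of_true {A X Z Y : Ω → Bool}
    (hY : ∀ ω, Y ω = bif A ω then X ω else Z ω) (b : Bool) :
    condP μ {ω | Y ω = b} (F ∩ {ω | A ω = true}) =
      condP μ {ω | X ω = b} (F ∩ {ω | A ω = true}) :=
  condP_congr <| by ext ω; rcases hA : A ω <;> simp [hY, hA]

lemma condP_of_eq_bif_of_false {A X Z Y : Ω → Bool}
    (hY : ∀ ω, Y ω = bif A ω then X ω else Z ω) (b : Bool) :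
    condP μ {ω | Y ω = b} (F ∩ {ω | A ω = false}) =
      condP μ {ω | Z ω = b} (F ∩ {ω | A ω = false}) :=
  condP_congr <| by ext ω; rcases hA : A ω <;> simp [hY, hA]

lemma condP_inter_right_eq_of_indep (hB : condP μ B F ≠ 0)
    (hind : condP μ (B ∩ E) F = condP μ B F * condP μ E F) :
    condP μ E (F ∩ B) = condP μ E F := by
  have hF := measureReal_ne_zero_of_condP_ne_zero hB
  have hBF : μ.real (B ∩ F) ≠ 0 := by
    rintro h; simp [condP_eq_measureReal, h] at hB
  simp only [condP_eq_measureReal] at hind ⊢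
  rw [Set.inter_comm F B, ← Set.inter_assoc, Set.inter_comm E B, div_eq_iff hBF,
    div_mul_eq_mul_div, eq_div_iff hF]
  rw [div_mul_div_comm, div_eq_div_iff hF (mul_ne_zero hF hF)] at hind
  exact mul_right_cancel₀ hF (by linear_combination hind)

lemma condP_inter_eq_mul_of_forall_bool [IsFiniteMeasure μ] {f : Ω → Bool} (hf : Measurable f)
    (h : ∀ b, condP μ (B ∩ (E ∩ {ω | f ω = b})) F =
      condP μ B F * condP μ (E ∩ {ω | f ω = b}) F) :
    condP μ (B ∩ E) F = condP μ B F * condP μ E F := by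
  rw [← condP_inter_true_add_condP_inter_false hf (B ∩ E),
    ← condP_inter_true_add_condP_inter_false hf E, mul_add, ← h, ← h,
    Set.inter_assoc, Set.inter_assoc]

-- No positivity assumption is needed: if `μ (B ∩ F) = 0`, both sides vanish as `x / 0 = 0`.
lemma condP_mul_condP [IsFiniteMeasure μ] (E B F : Set Ω) :
    condP μ E (B ∩ F) * condP μ B F = condP μ (E ∩ B) F := by
  rw [condP_eq_measureReal, condP_eq_measureReal, condP_eq_measureReal, ← Set.inter_assoc]
  by_cases hBF : μ.real (B ∩ F) = 0
  · have hEBF : μ.real (E ∩ B ∩ F) = 0 := by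
      rw [measureReal_eq_zero_iff] at hBF ⊢
      exact measure_mono_null (Set.inter_assoc E B F ▸ Set.inter_subset_right) hBF
    simp [hBF, hEBF]
  · rw [div_mul_div_cancel₀ hBF]

lemma condP_inter_eq_mul_of_condP_eq [IsFiniteMeasure μ] {p : ℝ}
    (h : 0 < μ (B ∩ F) → condP μ E (B ∩ F) = p) :
    condP μ (E ∩ B) F = p * condP μ B F := by
  rcases eq_zero_or_pos (μ (B ∩ F)) with hBF | hBF
  · have hB : condP μ B F = 0 := by simp [condP, hBF]
    rw [← condP_mul_condP, hB, mul_zero, mul_zero]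
  · rw [← condP_mul_condP, h hBF]

end CondP

theorem stmt11_general
    {Ω : Type*} [MeasurableSpace Ω] (μ : Measure Ω) [IsProbabilityMeasure μ]
    {m : ℕ}
    (G : Ω → Fin m) (A Y0 Y1 Y : Ω → Bool)
    (hAmeas : Measurable A)
    (hY0meas : Measurable Y0) (hY1meas : Measurable Y1)
    (hYdef : ∀ ω, Y ω = bif A ω then Y1 ω else Y0 ω)
    -- Assumption 1
    (hA1ov : ∀ g : Fin m, 0 < condP μ {ω | A ω = true} {ω | G ω = g} ∧
        condP μ {ω | A ω = true} {ω | G ω = g} < 1)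
    (hA1ind : ∀ (g : Fin m) (a y0 y1 : Bool),
      condP μ {ω | A ω = a ∧ Y0 ω = y0 ∧ Y1 ω = y1} {ω | G ω = g} =
        condP μ {ω | A ω = a} {ω | G ω = g} *
          condP μ {ω | Y0 ω = y0 ∧ Y1 ω = y1} {ω | G ω = g})
    -- Assumption 2
    (hA2 : ∀ (a b : Bool) (g : Fin m), 0 < μ {ω | Y0 ω = a ∧ G ω = g} →
      condP μ {ω | Y1 ω = b} {ω | Y0 ω = a ∧ G ω = g} =
        condP μ {ω | Y1 ω = b} {ω | Y0 ω = a}) :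
    ∀ g : Fin m,
      condP μ {ω | Y ω = true} {ω | G ω = g ∧ A ω = true} =
        condP μ {ω | Y1 ω = true} {ω | Y0 ω = false} *
          condP μ {ω | Y ω = false} {ω | G ω = g ∧ A ω = false} +
        condP μ {ω | Y1 ω = true} {ω | Y0 ω = true} *
          condP μ {ω | Y ω = true} {ω | G ω = g ∧ A ω = false} := by
  intro g
  set F := {ω | G ω = g}
  set π₁ := fun a => condP μ {ω | Y1 ω = true} {ω | Y0 ω = a}
  have hA1 : condP μ {ω | A ω = true} F ≠ 0 := (hA1ov g).1.ne'
  have hA0 : condP μ {ω | A ω = false} F ≠ 0 := by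
    rw [condP_false_eq_one_sub_condP_true hAmeas (measureReal_ne_zero_of_condP_ne_zero hA1)]
    linarith [(hA1ov g).2]
  have hY1_indep : condP μ {ω | Y1 ω = true} (F ∩ {ω | A ω = true}) =
      condP μ {ω | Y1 ω = true} F :=
    condP_inter_right_eq_of_indep hA1 <| condP_inter_eq_mul_of_forall_bool hY0meas fun y0 => by
      rw [Set.inter_comm {ω | Y1 ω = true}]; exact hA1ind g true y0 true
  have hY0_indep : ∀ b, condP μ {ω | Y0 ω = b} (F ∩ {ω | A ω = false}) =
      condP μ {ω | Y0 ω = b} F := fun b =>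
    condP_inter_right_eq_of_indep hA0 <| condP_inter_eq_mul_of_forall_bool hY1meas fun y1 =>
      hA1ind g false b y1
  have hπ : ∀ a, condP μ ({ω | Y1 ω = true} ∩ {ω | Y0 ω = a}) F =
      π₁ a * condP μ {ω | Y0 ω = a} F := fun a =>
    condP_inter_eq_mul_of_condP_eq (hA2 a true g)
  calc condP μ {ω | Y ω = true} (F ∩ {ω | A ω = true})
      = condP μ {ω | Y1 ω = true} F := (condP_of_eq_bif_of_true hYdef true).trans hY1_indep
    _ = π₁ false * condP μ {ω | Y0 ω = false} F + π₁ true * condP μ {ω | Y0 ω = true} F := by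
      rw [← condP_inter_true_add_condP_inter_false hY0meas, hπ, hπ, add_comm]
    _ = π₁ false * condP μ {ω | Y ω = false} (F ∩ {ω | A ω = false}) +
          π₁ true * condP μ {ω | Y ω = true} (F ∩ {ω | A ω = false}) := by
      rw [condP_of_eq_bif_of_false hYdef, condP_of_eq_bif_of_false hYdef, hY0_indep, hY0_indep]

/-- **Observed-data linear system (Equation (2)).** Under Assumptions 1 and 2, for every `g`,
`P(Y=1 | G=g, A=1) = π₁₍₀₎·P(Y=0 | G=g, A=0) + π₁₍₁₎·P(Y=1 | G=g, A=0)`,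
where `π₁₍ₐ₎ := P(Y¹=1 | Y⁰=a)`. -/
theorem stmt11
    {Ω : Type*} [MeasurableSpace Ω] (μ : Measure Ω) [IsProbabilityMeasure μ]
    {m : ℕ} (hm : 1 ≤ m)
    (G : Ω → Fin m) (A Y0 Y1 Y : Ω → Bool)
    (hGmeas : Measurable G) (hAmeas : Measurable A)
    (hY0meas : Measurable Y0) (hY1meas : Measurable Y1)
    (hYdef : ∀ ω, Y ω = bif A ω then Y1 ω else Y0 ω)
    -- Assumption 1
    (hA1pos : ∀ g : Fin m, 0 < μ {ω | G ω = g})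
    (hA1ov : ∀ g : Fin m, 0 < condP μ {ω | A ω = true} {ω | G ω = g} ∧
        condP μ {ω | A ω = true} {ω | G ω = g} < 1)
    (hA1ind : ∀ (g : Fin m) (a y0 y1 : Bool),
      condP μ {ω | A ω = a ∧ Y0 ω = y0 ∧ Y1 ω = y1} {ω | G ω = g} =
        condP μ {ω | A ω = a} {ω | G ω = g} *
          condP μ {ω | Y0 ω = y0 ∧ Y1 ω = y1} {ω | G ω = g})
    -- Assumption 2
    (hA2pos : ∀ a : Bool, 0 < μ {ω | Y0 ω = a})
    (hA2 : ∀ (a b : Bool) (g : Fin m), 0 < μ {ω | Y0 ω = a ∧ G ω = g} →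
      condP μ {ω | Y1 ω = b} {ω | Y0 ω = a ∧ G ω = g} =
        condP μ {ω | Y1 ω = b} {ω | Y0 ω = a}) :
    ∀ g : Fin m,
      condP μ {ω | Y ω = true} {ω | G ω = g ∧ A ω = true} =
        condP μ {ω | Y1 ω = true} {ω | Y0 ω = false} *
          condP μ {ω | Y ω = false} {ω | G ω = g ∧ A ω = false} +
        condP μ {ω | Y1 ω = true} {ω | Y0 ω = true} *
          condP μ {ω | Y ω = true} {ω | G ω = g ∧ A ω = false} :=
  stmt11_general μ G A Y0 Y1 Y hAmeas hY0meas hY1meas hYdef hA1ov hA1ind hA2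
end

section
/- Identification of principal scores under monotonicity: Under Assumption 5 and the monotonicity condition μ(S¹ ≥ S⁰) = 1, for every g ∈ Fin m the principal scores δ_{ab|g} := P(S⁰=a, S¹=b | G=g) satisfy: δ_{10|g} = 0; δ_{11|g} = P(S=1 | A=0, G=g); δ_{01|g} = P(S=1 | A=1, G=g) − P(S=1 | A=0, G=g); and δ_{00|g} = 1 − P(S=1 | A=1, G=g). -/
/-!
Fix a trial `g` and work under `ν = μ[|G = g]`. Assumption 5 says that, under `ν`, the treatment
`A` is independent of the potential values `(S⁰, S¹, Y⁰, Y¹)`; together with consistency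
(`S = Sᵃ` on `{A = a}`) this identifies `P(S = 1 | A = a, G = g)` with the marginal
`P(Sᵃ = 1 | G = g)`, overlap guaranteeing that both arms can be conditioned on. Monotonicity
empties the stratum `(S⁰, S¹) = (1, 0)`, and then the two marginals `P(S⁰ = 1)` and `P(S¹ = 1)`
determine the three remaining cells of the `2 × 2` table of principal strata.
-/

open MeasureTheory ProbabilityTheory

section

variable {Ω : Type*} [MeasurableSpace Ω]

lemma condP_eq_cond_measureReal {μ : Measure Ω} {F : Set Ω} (hF : MeasurableSet F) (E : Set Ω) :
    condP μ E F = (μ[|F]).real E := by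
  rw [condP, measureReal_def, cond_apply hF, ENNReal.toReal_mul, ENNReal.toReal_inv,
    Set.inter_comm, div_eq_inv_mul]

lemma condP_inter_eq_cond_cond_measureReal {μ : Measure Ω} [IsFiniteMeasure μ] {E F H : Set Ω}
    (hF : MeasurableSet F) (hH : MeasurableSet H) :
    condP μ E (F ∩ H) = (μ[|H][|F]).real E := by
  rw [cond_cond_eq_cond_inter' hH hF (measure_ne_top μ H), Set.inter_comm,
    condP_eq_cond_measureReal (hH.inter hF)]

lemma indepFun_of_measureReal_inter_singleton_s14 {α β : Type*} [MeasurableSpace α]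
    [MeasurableSpace β] [Countable α] [Countable β] [MeasurableSingletonClass α]
    [MeasurableSingletonClass β] {ν : Measure Ω} [IsFiniteMeasure ν] {X : Ω → α} {Y : Ω → β}
    (hX : Measurable X) (hY : Measurable Y)
    (h : ∀ a b, ν.real (X ⁻¹' {a} ∩ Y ⁻¹' {b}) = ν.real (X ⁻¹' {a}) * ν.real (Y ⁻¹' {b})) :
    X ⟂ᵢ[ν] Y := by
  rw [indepFun_iff_map_prod_eq_prod_map_map hX.aemeasurable hY.aemeasurable,
    ext_iff_measureReal_singleton]
  rintro ⟨a, b⟩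
  rw [← Set.singleton_prod_singleton, measureReal_prod_prod,
    map_measureReal_apply (hX.prodMk hY)
      ((measurableSet_singleton a).prod (measurableSet_singleton b)),
    map_measureReal_apply hX (measurableSet_singleton a),
    map_measureReal_apply hY (measurableSet_singleton b), Set.mk_preimage_prod]
  exact h a b

lemma ProbabilityTheory.IndepFun.cond_preimage_eq {α β : Type*} [MeasurableSpace α]
    [MeasurableSpace β] {ν : Measure Ω} {X : Ω → α} {Y : Ω → β} (hXY : X ⟂ᵢ[ν] Y)
    (hX : Measurable X) {s : Set α} {t : Set β} (hs : MeasurableSet s) (ht : MeasurableSet t)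
    (hνs : ν (X ⁻¹' s) ≠ 0) (hνs' : ν (X ⁻¹' s) ≠ ⊤) :
    ν[|X ⁻¹' s] (Y ⁻¹' t) = ν (Y ⁻¹' t) := by
  rw [cond_apply (hX hs), hXY.measure_inter_preimage_eq_mul _ _ hs ht, ← mul_assoc,
    ENNReal.inv_mul_cancel hνs hνs', one_mul]

lemma cond_preimage_eq_of_consistent {α β : Type*} [MeasurableSpace α] [MeasurableSpace β]
    [MeasurableSingletonClass α] {ν : Measure Ω} [IsFiniteMeasure ν] {A : Ω → α} {S S' : Ω → β}
    {a : α} (hA : Measurable A) (hS : ∀ ω, A ω = a → S ω = S' ω) (hAS' : A ⟂ᵢ[ν] S')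
    (hνa : ν (A ⁻¹' {a}) ≠ 0) {t : Set β} (ht : MeasurableSet t) :
    ν[|A ⁻¹' {a}] (S ⁻¹' t) = ν (S' ⁻¹' t) := by
  have hset : A ⁻¹' {a} ∩ S ⁻¹' t = A ⁻¹' {a} ∩ S' ⁻¹' t := by
    ext ω
    simp only [Set.mem_inter_iff, Set.mem_preimage, Set.mem_singleton_iff]
    exact and_congr_right fun ha => by rw [hS ω ha]
  rw [cond_apply (hA (measurableSet_singleton a)), hset,
    ← cond_apply (hA (measurableSet_singleton a)),
    hAS'.cond_preimage_eq hA (measurableSet_singleton a) ht hνa (measure_ne_top ν _)]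

lemma condP_inter_eq_condP_of_consistent {α β : Type*} [MeasurableSpace α] [MeasurableSpace β]
    [MeasurableSingletonClass α] {μ : Measure Ω} [IsFiniteMeasure μ] {H : Set Ω}
    {A : Ω → α} {S S' : Ω → β} {a : α} (hH : MeasurableSet H) (hA : Measurable A)
    (hS : ∀ ω, A ω = a → S ω = S' ω) (hAS' : A ⟂ᵢ[μ[|H]] S') (hHa : μ[|H] (A ⁻¹' {a}) ≠ 0)
    {t : Set β} (ht : MeasurableSet t) :
    condP μ (S ⁻¹' t) (A ⁻¹' {a} ∩ H) = condP μ (S' ⁻¹' t) H := by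
  rw [condP_inter_eq_cond_cond_measureReal (hA (measurableSet_singleton a)) hH,
    condP_eq_cond_measureReal hH, measureReal_def, measureReal_def,
    cond_preimage_eq_of_consistent hA hS hAS' hHa ht]

lemma probReal_setOf_eq_false {ν : Measure Ω} [IsProbabilityMeasure ν] {f : Ω → Bool}
    (hf : Measurable f) : ν.real {ω | f ω = false} = 1 - ν.real {ω | f ω = true} := by
  rw [← probReal_compl_eq_one_sub (s := {ω | f ω = true}) (hf (measurableSet_singleton true))]
  simp only [Set.compl_ofPred, Bool.not_eq_true]

lemma measure_setOf_eq_ne_zero_of_pos_of_lt_one {ν : Measure Ω} [IsProbabilityMeasure ν]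
    {A : Ω → Bool} (hA : Measurable A) (hpos : 0 < ν.real {ω | A ω = true})
    (hlt : ν.real {ω | A ω = true} < 1) (a : Bool) : ν {ω | A ω = a} ≠ 0 := by
  have hposA : 0 < ν.real {ω | A ω = a} := by
    cases a
    · linarith [probReal_setOf_eq_false (ν := ν) hA]
    · exact hpos
  exact fun h => hposA.ne' (by rw [measureReal_def, h, ENNReal.toReal_zero])

lemma measure_setOf_true_and_false_eq_zero {μ : Measure Ω} [IsProbabilityMeasure μ]
    {X Y : Ω → Bool} (hX : Measurable X) (hY : Measurable Y) (hXY : μ {ω | X ω ≤ Y ω} = 1) :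
    μ {ω | X ω = true ∧ Y ω = false} = 0 := by
  rw [← prob_compl_eq_one_iff (s := {ω | X ω = true ∧ Y ω = false})
    ((hX (measurableSet_singleton true)).inter (hY (measurableSet_singleton false))), ← hXY]
  congr 1
  ext ω
  simp only [Set.mem_compl_iff, Set.mem_ofPred_eq]
  cases X ω <;> cases Y ω <;> decide

lemma measureReal_inter_true_add_inter_false {ν : Measure Ω} [IsFiniteMeasure ν] {f : Ω → Bool}
    (hf : Measurable f) (s : Set Ω) :
    ν.real (s ∩ {ω | f ω = true}) + ν.real (s ∩ {ω | f ω = false}) = ν.real s := by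
  have hfalse : {ω | f ω = false} = {ω | f ω = true}ᶜ := by
    simp only [Set.compl_ofPred, Bool.not_eq_true]
  rw [hfalse]
  exact measureReal_inter_add_sdiff (hf (measurableSet_singleton true))

lemma measureReal_principalStrata_of_monotone {ν : Measure Ω} [IsProbabilityMeasure ν]
    {X Y : Ω → Bool} (hX : Measurable X) (hY : Measurable Y)
    (hXY : ν {ω | X ω = true ∧ Y ω = false} = 0) :
    ν.real {ω | X ω = true ∧ Y ω = true} = ν.real {ω | X ω = true} ∧
    ν.real {ω | X ω = false ∧ Y ω = true} = ν.real {ω | Y ω = true} - ν.real {ω | X ω = true} ∧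
    ν.real {ω | X ω = false ∧ Y ω = false} = 1 - ν.real {ω | Y ω = true} := by
  have h10 : ν.real {ω | X ω = true ∧ Y ω = false} = 0 := by
    rw [measureReal_def, hXY, ENNReal.toReal_zero]
  have hX1 : ν.real {ω | X ω = true ∧ Y ω = true} + ν.real {ω | X ω = true ∧ Y ω = false} =
      ν.real {ω | X ω = true} :=
    measureReal_inter_true_add_inter_false hY _
  have hY1 : ν.real {ω | Y ω = true ∧ X ω = true} + ν.real {ω | Y ω = true ∧ X ω = false} =
      ν.real {ω | Y ω = true} :=
    measureReal_inter_true_add_inter_false hX _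
  have hY0 : ν.real {ω | Y ω = false ∧ X ω = true} + ν.real {ω | Y ω = false ∧ X ω = false} =
      1 - ν.real {ω | Y ω = true} :=
    (measureReal_inter_true_add_inter_false hX _).trans (probReal_setOf_eq_false hY)
  simp only [and_comm (a := Y _ = _)] at hY1 hY0
  exact ⟨by linarith, by linarith, by linarith⟩

end

theorem stmt14_general
    {Ω : Type*} [MeasurableSpace Ω] (μ : Measure Ω) [IsProbabilityMeasure μ]
    {m : ℕ}
    (G : Ω → Fin m) (A S0 S1 Y0 Y1 S : Ω → Bool)
    (hGmeas : Measurable G) (hAmeas : Measurable A)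
    (hS0meas : Measurable S0) (hS1meas : Measurable S1)
    (hY0meas : Measurable Y0) (hY1meas : Measurable Y1)
    (hSdef : ∀ ω, S ω = bif A ω then S1 ω else S0 ω)
    -- Assumption 5
    (hA5pos : ∀ g : Fin m, 0 < μ {ω | G ω = g})
    (hA5ov : ∀ g : Fin m, 0 < condP μ {ω | A ω = true} {ω | G ω = g} ∧
        condP μ {ω | A ω = true} {ω | G ω = g} < 1)
    (hA5ind : ∀ (g : Fin m) (a s0 s1 y0 y1 : Bool),
      condP μ {ω | A ω = a ∧ S0 ω = s0 ∧ S1 ω = s1 ∧ Y0 ω = y0 ∧ Y1 ω = y1} {ω | G ω = g} =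
        condP μ {ω | A ω = a} {ω | G ω = g} *
          condP μ {ω | S0 ω = s0 ∧ S1 ω = s1 ∧ Y0 ω = y0 ∧ Y1 ω = y1} {ω | G ω = g})
    -- monotonicity S¹ ≥ S⁰
    (hmono : μ {ω | S0 ω ≤ S1 ω} = 1) :
    ∀ g : Fin m,
      condP μ {ω | S0 ω = true ∧ S1 ω = false} {ω | G ω = g} = 0 ∧
      condP μ {ω | S0 ω = true ∧ S1 ω = true} {ω | G ω = g} =
        condP μ {ω | S ω = true} {ω | A ω = false ∧ G ω = g} ∧
      condP μ {ω | S0 ω = false ∧ S1 ω = true} {ω | G ω = g} =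
        condP μ {ω | S ω = true} {ω | A ω = true ∧ G ω = g} -
          condP μ {ω | S ω = true} {ω | A ω = false ∧ G ω = g} ∧
      condP μ {ω | S0 ω = false ∧ S1 ω = false} {ω | G ω = g} =
        1 - condP μ {ω | S ω = true} {ω | A ω = true ∧ G ω = g} := by
  intro g
  have hGg : MeasurableSet {ω | G ω = g} := hGmeas (measurableSet_singleton g)
  set ν := μ[|{ω | G ω = g}]
  have : IsProbabilityMeasure ν := cond_isProbabilityMeasure (hA5pos g).ne'
  have hcondP : ∀ E, condP μ E {ω | G ω = g} = ν.real E := condP_eq_cond_measureReal hGg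
  have hAV : A ⟂ᵢ[ν] fun ω => (S0 ω, S1 ω, Y0 ω, Y1 ω) :=
    indepFun_of_measureReal_inter_singleton_s14 hAmeas (by fun_prop) fun a v => by
      simpa [hcondP, Set.preimage, Prod.ext_iff, Set.ofPred_and] using
        hA5ind g a v.1 v.2.1 v.2.2.1 v.2.2.2
  have hνA : ∀ a, ν {ω | A ω = a} ≠ 0 :=
    measure_setOf_eq_ne_zero_of_pos_of_lt_one hAmeas (hcondP _ ▸ (hA5ov g).1)
      (hcondP _ ▸ (hA5ov g).2)
  have hobs : ∀ a, condP μ {ω | S ω = true} {ω | A ω = a ∧ G ω = g} =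
      ν.real {ω | (bif a then S1 ω else S0 ω) = true} := fun a =>
    (condP_inter_eq_condP_of_consistent hGg hAmeas (fun ω ha => by rw [hSdef, ha]; rfl)
      (hAV.comp measurable_id (by fun_prop : Measurable fun v : Bool × Bool × Bool × Bool =>
        bif a then v.2.1 else v.1)) (hνA a) (measurableSet_singleton true)).trans (hcondP _)
  have hν10 : ν {ω | S0 ω = true ∧ S1 ω = false} = 0 :=
    cond_absolutelyContinuous (measure_setOf_true_and_false_eq_zero hS0meas hS1meas hmono)
  obtain ⟨h11, h01, h00⟩ := measureReal_principalStrata_of_monotone hS0meas hS1meas hν10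
  simp only [hobs, hcondP, cond_true, cond_false]
  exact ⟨by rw [measureReal_def, hν10, ENNReal.toReal_zero], h11, h01, h00⟩

/-- **Identification of principal scores under monotonicity.** Under Assumption 5 and
`S¹ ≥ S⁰` a.s., the principal scores `δ_{ab|g} = P(S⁰=a, S¹=b | G=g)` satisfy
`δ_{10|g} = 0`, `δ_{11|g} = P(S=1 | A=0, G=g)`,
`δ_{01|g} = P(S=1 | A=1, G=g) − P(S=1 | A=0, G=g)` and
`δ_{00|g} = 1 − P(S=1 | A=1, G=g)`. -/
theorem stmt14
    {Ω : Type*} [MeasurableSpace Ω] (μ : Measure Ω) [IsProbabilityMeasure μ]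
    {m : ℕ} (hm : 1 ≤ m)
    (G : Ω → Fin m) (A S0 S1 Y0 Y1 S Y : Ω → Bool)
    (hGmeas : Measurable G) (hAmeas : Measurable A)
    (hS0meas : Measurable S0) (hS1meas : Measurable S1)
    (hY0meas : Measurable Y0) (hY1meas : Measurable Y1)
    (hSdef : ∀ ω, S ω = bif A ω then S1 ω else S0 ω)
    (hYdef : ∀ ω, Y ω = bif A ω then Y1 ω else Y0 ω)
    -- Assumption 5
    (hA5pos : ∀ g : Fin m, 0 < μ {ω | G ω = g})
    (hA5ov : ∀ g : Fin m, 0 < condP μ {ω | A ω = true} {ω | G ω = g} ∧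
        condP μ {ω | A ω = true} {ω | G ω = g} < 1)
    (hA5ind : ∀ (g : Fin m) (a s0 s1 y0 y1 : Bool),
      condP μ {ω | A ω = a ∧ S0 ω = s0 ∧ S1 ω = s1 ∧ Y0 ω = y0 ∧ Y1 ω = y1} {ω | G ω = g} =
        condP μ {ω | A ω = a} {ω | G ω = g} *
          condP μ {ω | S0 ω = s0 ∧ S1 ω = s1 ∧ Y0 ω = y0 ∧ Y1 ω = y1} {ω | G ω = g})
    -- monotonicity S¹ ≥ S⁰
    (hmono : μ {ω | S0 ω ≤ S1 ω} = 1) :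
    ∀ g : Fin m,
      condP μ {ω | S0 ω = true ∧ S1 ω = false} {ω | G ω = g} = 0 ∧
      condP μ {ω | S0 ω = true ∧ S1 ω = true} {ω | G ω = g} =
        condP μ {ω | S ω = true} {ω | A ω = false ∧ G ω = g} ∧
      condP μ {ω | S0 ω = false ∧ S1 ω = true} {ω | G ω = g} =
        condP μ {ω | S ω = true} {ω | A ω = true ∧ G ω = g} -
          condP μ {ω | S ω = true} {ω | A ω = false ∧ G ω = g} ∧
      condP μ {ω | S0 ω = false ∧ S1 ω = false} {ω | G ω = g} =
        1 - condP μ {ω | S ω = true} {ω | A ω = true ∧ G ω = g} :=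
  stmt14_general μ G A S0 S1 Y0 Y1 S hGmeas hAmeas hS0meas hS1meas hY0meas hY1meas hSdef hA5pos
    hA5ov hA5ind hmono
end
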